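/- (Domination via soft local times; Corollary c:couplesystem) In the soft local time construction: given densities (g_j)_{j=1}^{J} on Σ with ∫ g_j dμ = 1 and the associated quantities ξ_j, G_j, and indices i_j for j = 1,…,J, one has for every ζ > 0 that Q[ ∑_{j≤J} δ_{z_{i_j}} ≤ ∑_{i : v_i < ζ} δ_{z_i} ] ≥ Q[ G_J(z) ≤ ζ for all z ∈ Σ ]. In particular, on the event that the soft local time G_J stays below ζ everywhere, the J simulated points are dominated by the Poisson point process of intensity ζ·μ obtained by keeping the points (z_i) with v_i < ζ. -/

import Mathlib

open MeasureTheory ENNReal ProbabilityTheory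

/-- `(Q, z, v)` represents a Poisson point process `m = ∑ᵢ δ_{(zᵢ, vᵢ)}` on `E × ℝ₊` with
intensity `μ ⊗ dv`, realized on the probability space `(Ω, Q)`: the points are a.s. distinct
with nonnegative second coordinates, counts of points in measurable sets of finite intensity
are Poisson distributed with the corresponding rate, and counts in disjoint sets are
independent. -/
structure IsPPP {E : Type*} [MeasurableSpace E] {Ω : Type*} [MeasurableSpace Ω]
    (Q : Measure Ω) (z : ℕ → Ω → E) (v : ℕ → Ω → ℝ) (μ : Measure E) : Prop where
  meas_z : ∀ i, Measurable (z i)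
  meas_v : ∀ i, Measurable (v i)
  nonneg : ∀ᵐ ω ∂Q, ∀ i, 0 ≤ v i ω
  distinct : ∀ᵐ ω ∂Q, ∀ i j, i ≠ j → (z i ω, v i ω) ≠ (z j ω, v j ω)
  count : ∀ A : Set (E × ℝ), MeasurableSet A →
    (μ.prod (volume.restrict (Set.Ici (0 : ℝ)))) A < ⊤ →
    ∀ n : ℕ,
      Q {ω | {i : ℕ | (z i ω, v i ω) ∈ A}.encard = (n : ℕ∞)}
        = ENNReal.ofReal
            (poissonPMFReal ((μ.prod (volume.restrict (Set.Ici (0 : ℝ)))) A).toNNReal n)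
  indep : ∀ (N : ℕ) (A : Fin N → Set (E × ℝ)), (∀ a, MeasurableSet (A a)) →
    Pairwise (Function.onFun Disjoint A) → ∀ f : Fin N → ℕ,
      Q (⋂ a, {ω | {i : ℕ | (z i ω, v i ω) ∈ A a}.encard = (f a : ℕ∞)})
        = ∏ a, Q {ω | {i : ℕ | (z i ω, v i ω) ∈ A a}.encard = (f a : ℕ∞)}

/-- The soft local time construction: `softLT g z v k = (ξ_k, G_k)` where
`ξ_k = inf{ t ≥ 0 : for at least k indices i, v i ≤ t·g_k(z_i) + G_{k-1}(z_i) }` and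
`G_k = G_{k-1} + ξ_k · g_k` (with `G_0 = 0` and the convention `ξ_0 = 0`). -/
noncomputable def softLT {E : Type*} (g : ℕ → E → ℝ) (z : ℕ → E) (v : ℕ → ℝ) :
    ℕ → ℝ × (E → ℝ)
  | 0 => (0, fun _ => 0)
  | k + 1 =>
    let G := (softLT g z v k).2
    let ξ := sInf {t : ℝ | 0 ≤ t ∧
      ((k + 1 : ℕ) : ℕ∞) ≤ {i : ℕ | v i ≤ t * g (k + 1) (z i) + G (z i)}.encard}
    (ξ, fun x => G x + ξ * g (k + 1) x)

/-!
Fix a realisation of the point process. Since `G_j` is nondecreasing in `j`, the selected point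
`z_{i_j}` sits at height `v_{i_j} = G_j(z_{i_j}) ≤ G_J(z_{i_j}) ≤ ζ`, and almost surely no `v_i`
equals `ζ`; so it remains to see that the selected indices are distinct. Almost surely each
sublevel set `{i : v_i ≤ t g_k(z_i) + G_{k-1}(z_i)}` is finite and eventually has `k` elements, so
the infimum defining `ξ_k` is attained and at least `k` points lie weakly below `G_k`. On the
other hand, finitely many points lying below `G_{k-1}` or strictly below `G_k` all lie below
`G_{k-1} + t g_k` for some `t < ξ_k` (if `ξ_k > 0`), so there are at most `k - 1` of them. With the
uniqueness of the point on each curve, this forces `i_k` to lie strictly above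
`G_{k-1} ≥ G_j` for every `j < k`, whereas `i_j` lies on `G_j`.
-/

open Filter Topology Finset

section SoftLocalTime

variable {E : Type*} (g : ℕ → E → ℝ) (z : ℕ → E) (v : ℕ → ℝ)

def softLTSublevel (k : ℕ) (t : ℝ) : Set ℕ :=
  {i | v i ≤ t * g (k + 1) (z i) + (softLT g z v k).2 (z i)}

theorem softLT_fst_succ (k : ℕ) :
    (softLT g z v (k + 1)).1 =
      sInf {t | 0 ≤ t ∧ ((k + 1 : ℕ) : ℕ∞) ≤ (softLTSublevel g z v k t).encard} :=
  rfl

theorem softLT_snd_succ (k : ℕ) (x : E) :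
    (softLT g z v (k + 1)).2 x = (softLT g z v k).2 x + (softLT g z v (k + 1)).1 * g (k + 1) x :=
  rfl

theorem softLT_fst_nonneg (k : ℕ) : 0 ≤ (softLT g z v k).1 := by
  cases k with
  | zero => exact le_rfl
  | succ k => exact Real.sInf_nonneg fun _ ht => ht.1

theorem softLTSublevel_zero (k : ℕ) :
    softLTSublevel g z v k 0 = {i | v i ≤ (softLT g z v k).2 (z i)} := by
  simp [softLTSublevel]

theorem softLTSublevel_softLT_fst_succ (k : ℕ) :
    softLTSublevel g z v k (softLT g z v (k + 1)).1 =
      {i | v i ≤ (softLT g z v (k + 1)).2 (z i)} := by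
  simp [softLTSublevel, softLT_snd_succ, add_comm]

theorem encard_softLTSublevel_le_of_lt_softLT_fst {k : ℕ} {t : ℝ} (ht0 : 0 ≤ t)
    (ht : t < (softLT g z v (k + 1)).1) : (softLTSublevel g z v k t).encard ≤ k := by
  by_contra h
  have hmem : ((k + 1 : ℕ) : ℕ∞) ≤ (softLTSublevel g z v k t).encard := by
    exact_mod_cast Order.add_one_le_of_lt (not_le.1 h)
  rw [softLT_fst_succ] at ht
  exact ht.not_ge (csInf_le ⟨0, fun _ hs => hs.1⟩ ⟨ht0, hmem⟩)

variable {g}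

section Nonneg

variable (hg0 : ∀ j x, 0 ≤ g j x)
include hg0

theorem softLT_snd_nonneg (k : ℕ) (x : E) : 0 ≤ (softLT g z v k).2 x := by
  induction k with
  | zero => exact le_rfl
  | succ k ih => exact add_nonneg ih (mul_nonneg (softLT_fst_nonneg g z v (k + 1)) (hg0 _ _))

theorem softLT_snd_mono (x : E) : Monotone fun k => (softLT g z v k).2 x :=
  monotone_nat_of_le_succ fun k =>
    le_add_of_nonneg_right (mul_nonneg (softLT_fst_nonneg g z v (k + 1)) (hg0 _ _))

theorem softLT_snd_le_mul_sum {c : ℝ} {k : ℕ} (hc : ∀ j < k, (softLT g z v (j + 1)).1 ≤ c)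
    (x : E) : (softLT g z v k).2 x ≤ c * ∑ j ∈ range k, g (j + 1) x := by
  induction k with
  | zero => simp [softLT]
  | succ k ih =>
    rw [softLT_snd_succ, sum_range_succ, mul_add]
    exact add_le_add (ih fun j hj => hc j (by omega))
      (mul_le_mul_of_nonneg_right (hc k k.lt_succ_self) (hg0 _ _))

theorem softLTSublevel_mono (k : ℕ) : Monotone (softLTSublevel g z v k) :=
  fun _ _ h i (hi : v i ≤ _) => show v i ≤ _ from hi.trans (by gcongr; exact hg0 _ _)

theorem setOf_le_mul_subset_softLTSublevel (k : ℕ) (t : ℝ) :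
    {i | v i ≤ t * g (k + 1) (z i)} ⊆ softLTSublevel g z v k t := fun i hi =>
  le_add_of_le_of_nonneg hi (softLT_snd_nonneg z v hg0 k (z i))

theorem finite_softLTSublevel {J k : ℕ} (hk : k < J)
    (hfin : ∀ c : ℝ, {i | v i ≤ c * ∑ j ∈ range J, g (j + 1) (z i)}.Finite)
    {t : ℝ} (ht : 0 ≤ t) : (softLTSublevel g z v k t).Finite := by
  set c := t + ∑ j ∈ range J, (softLT g z v (j + 1)).1
  have hξ : ∀ j < J, (softLT g z v (j + 1)).1 ≤ c := fun j hj =>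
    le_add_of_nonneg_of_le ht (single_le_sum (fun j _ => softLT_fst_nonneg g z v (j + 1))
      (mem_range.2 hj))
  have htc : t ≤ c := le_add_of_nonneg_right (sum_nonneg fun j _ => softLT_fst_nonneg g z v _)
  refine (hfin c).subset fun i (hi : v i ≤ _) => show v i ≤ _ from hi.trans ?_
  calc t * g (k + 1) (z i) + (softLT g z v k).2 (z i)
      ≤ c * g (k + 1) (z i) + c * ∑ j ∈ range k, g (j + 1) (z i) :=
        add_le_add (mul_le_mul_of_nonneg_right htc (hg0 _ _))
          (softLT_snd_le_mul_sum z v hg0 (fun j hj => hξ j (by omega)) _)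
    _ = c * ∑ j ∈ range (k + 1), g (j + 1) (z i) := by rw [sum_range_succ]; ring
    _ ≤ c * ∑ j ∈ range J, g (j + 1) (z i) :=
        mul_le_mul_of_nonneg_left (sum_le_sum_of_subset_of_nonneg (range_subset_range.2 hk)
          fun j _ _ => hg0 _ _) (ht.trans htc)

theorem encard_le_of_softLT_fst_pos {k : ℕ} (hξ : 0 < (softLT g z v (k + 1)).1) :
    {i | v i ≤ (softLT g z v k).2 (z i) ∨ v i < (softLT g z v (k + 1)).2 (z i)}.encard ≤ k := by
  by_contra h
  obtain ⟨F, hFsub, hFcard⟩ := Set.exists_subset_encard_eq (Order.add_one_le_of_lt (not_le.1 h))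
  have hFfin : F.Finite := Set.finite_of_encard_eq_coe (k := k + 1) (by exact_mod_cast hFcard)
  have hev : ∀ i ∈ F, ∀ᶠ t in 𝓝[<] (softLT g z v (k + 1)).1, i ∈ softLTSublevel g z v k t := by
    intro i hi
    rcases hFsub hi with hle | hlt
    · filter_upwards [Ioo_mem_nhdsLT hξ] with t ht
      exact softLTSublevel_mono z v hg0 k ht.1.le (by rwa [softLTSublevel_zero])
    · rw [softLT_snd_succ, add_comm] at hlt
      have hcont : Continuous fun t => t * g (k + 1) (z i) + (softLT g z v k).2 (z i) := by
        fun_prop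
      exact ((hcont.tendsto _).mono_left nhdsWithin_le_nhds |>.eventually_const_lt hlt).mono
        fun _ h => h.le
  obtain ⟨t, ⟨ht0, htξ⟩, hFt⟩ :=
    ((eventually_mem_set.2 (Ioo_mem_nhdsLT hξ)).and ((eventually_all_finite hFfin).2 hev)).exists
  have := (Set.encard_le_encard hFt).trans
    (encard_softLTSublevel_le_of_lt_softLT_fst g z v ht0.le htξ)
  rw [hFcard] at this
  norm_cast at this
  omega

theorem le_encard_setOf_le_softLT_snd_succ {k : ℕ}
    (hfin : (softLTSublevel g z v k ((softLT g z v (k + 1)).1 + 1)).Finite)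
    (hne : ∃ t, 0 ≤ t ∧ ((k + 1 : ℕ) : ℕ∞) ≤ (softLTSublevel g z v k t).encard) :
    ((k + 1 : ℕ) : ℕ∞) ≤ {i | v i ≤ (softLT g z v (k + 1)).2 (z i)}.encard := by
  set ξ := (softLT g z v (k + 1)).1
  set S := softLTSublevel g z v k
  have hlarge : ∀ t, ξ < t → ((k + 1 : ℕ) : ℕ∞) ≤ (S t).encard := fun t ht => by
    obtain ⟨s, ⟨-, hs⟩, hst⟩ := (csInf_lt_iff ⟨0, fun _ h => h.1⟩ hne).1 ht
    exact hs.trans (Set.encard_le_encard (softLTSublevel_mono z v hg0 k hst.le))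
  have hleave : ∀ i ∈ S (ξ + 1) \ S ξ, ∀ᶠ t in 𝓝 ξ, i ∉ S t := by
    rintro i ⟨-, hi⟩
    have hcont : Continuous fun t => t * g (k + 1) (z i) + (softLT g z v k).2 (z i) := by
      fun_prop
    exact ((hcont.tendsto ξ).eventually_lt_const (not_le.1 hi)).mono fun _ h => not_le.2 h
  -- For `t` slightly above `ξ`, `S t` has `k + 1` elements but has already lost the finitely
  -- many points of `S (ξ + 1)` lying above the curve at `ξ`.
  obtain ⟨t, htξ, htξ1, hout⟩ := (eventually_mem_nhdsWithin.and
    ((eventually_lt_nhds (lt_add_one ξ)).and ((eventually_all_finite hfin.sdiff).2 hleave)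
      |>.filter_mono nhdsWithin_le_nhds) : ∀ᶠ t in 𝓝[>] ξ, _).exists
  rw [← softLTSublevel_softLT_fst_succ]
  refine (hlarge t htξ).trans (Set.encard_le_encard fun i hi => ?_)
  by_contra hξi
  exact hout i ⟨softLTSublevel_mono z v hg0 k (le_of_lt htξ1) hi, hξi⟩ hi

variable {z v} (h0 : ∀ i, 0 ≤ v i)
include h0

theorem encard_setOf_lt_softLT_snd_succ_le (k : ℕ) :
    {i | v i < (softLT g z v (k + 1)).2 (z i)}.encard ≤ k := by
  induction k with
  | zero =>
    rcases (softLT_fst_nonneg g z v 1).eq_or_lt with hξ | hξ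
    · have hG : ∀ x, (softLT g z v 1).2 x = 0 := fun x => by
        rw [softLT_snd_succ, ← hξ, zero_mul, add_zero]; rfl
      simp [hG, (h0 _).not_gt]
    · exact (Set.encard_le_encard fun i hi => Or.inr hi).trans
        (encard_le_of_softLT_fst_pos z v hg0 hξ)
  | succ k ih =>
    rcases (softLT_fst_nonneg g z v (k + 2)).eq_or_lt with hξ | hξ
    · simp only [softLT_snd_succ g z v (k + 1), ← hξ, zero_mul, add_zero]
      exact ih.trans (by simp)
    · exact (Set.encard_le_encard fun i hi => Or.inr hi).trans
        (encard_le_of_softLT_fst_pos z v hg0 hξ)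

theorem encard_setOf_le_softLT_snd_succ_le {k i₀ : ℕ}
    (huniq : ∀ i, (softLT g z v (k + 1)).2 (z i) = v i → i = i₀) :
    {i | v i ≤ (softLT g z v (k + 1)).2 (z i)}.encard ≤ k + 1 :=
  calc _ ≤ ({i | v i < (softLT g z v (k + 1)).2 (z i)} ∪ {i₀}).encard :=
        Set.encard_le_encard fun i (hi : v i ≤ _) =>
          (lt_or_eq_of_le hi).imp id fun h => huniq i h.symm
    _ ≤ {i | v i < (softLT g z v (k + 1)).2 (z i)}.encard + 1 := by
        simpa using Set.encard_union_le _ {i₀}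
    _ ≤ k + 1 := by gcongr; exact encard_setOf_lt_softLT_snd_succ_le hg0 h0 k

theorem softLT_snd_lt_of_unique {k i₀ i₁ : ℕ}
    (huniq₀ : ∀ i, (softLT g z v (k + 1)).2 (z i) = v i → i = i₀)
    (huniq₁ : ∀ i, (softLT g z v (k + 2)).2 (z i) = v i → i = i₁)
    (hfin : (softLTSublevel g z v (k + 1) ((softLT g z v (k + 2)).1 + 1)).Finite)
    (hne : ∃ t, 0 ≤ t ∧ ((k + 2 : ℕ) : ℕ∞) ≤ (softLTSublevel g z v (k + 1) t).encard) :
    (softLT g z v (k + 1)).2 (z i₁) < v i₁ := by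
  by_contra! hi₁
  set G := fun j => (softLT g z v j).2
  have hsub : {i | v i ≤ G (k + 2) (z i)} ⊆ {i | v i ≤ G (k + 1) (z i) ∨ v i < G (k + 2) (z i)} :=
    fun i (hi : v i ≤ G (k + 2) (z i)) =>
      (lt_or_eq_of_le hi).elim Or.inr fun h => Or.inl (huniq₁ i h.symm ▸ hi₁)
  have hsmall : {i | v i ≤ G (k + 1) (z i) ∨ v i < G (k + 2) (z i)}.encard ≤ (k + 1 : ℕ) := by
    rcases (softLT_fst_nonneg g z v (k + 2)).eq_or_lt with hξ | hξ
    · have hG : ∀ x, G (k + 2) x = G (k + 1) x := fun x => by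
        simp [G, softLT_snd_succ g z v (k + 1), ← hξ]
      simp only [hG, or_iff_left_of_imp le_of_lt]
      exact_mod_cast encard_setOf_le_softLT_snd_succ_le hg0 h0 huniq₀
    · exact encard_le_of_softLT_fst_pos z v hg0 hξ
  have := (le_encard_setOf_le_softLT_snd_succ z v hg0 hfin hne).trans
    ((Set.encard_le_encard hsub).trans hsmall)
  norm_cast at this
  omega

variable {J : ℕ} {iSel : ℕ → ℕ}
  (hfin : ∀ c : ℝ, {i | v i ≤ c * ∑ j ∈ range J, g (j + 1) (z i)}.Finite)
  (hne : ∀ k < J, ∃ t, 0 ≤ t ∧ ((k + 1 : ℕ) : ℕ∞) ≤ {i | v i ≤ t * g (k + 1) (z i)}.encard)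
  (hsel : ∀ k < J, (softLT g z v (k + 1)).2 (z (iSel (k + 1))) = v (iSel (k + 1)) ∧
    ∀ i, (softLT g z v (k + 1)).2 (z i) = v i → i = iSel (k + 1))
include hfin hne hsel

theorem softLT_selected_injective : Function.Injective fun a : Fin J => iSel (a.1 + 1) := by
  intro a b (hab : iSel (a.1 + 1) = iSel (b.1 + 1))
  by_contra hne_ab
  wlog hlt : a.1 < b.1 generalizing a b
  · exact this hab.symm (Ne.symm hne_ab) (by omega)
  obtain ⟨k, hk⟩ : ∃ k, b.1 = k + 1 := ⟨b.1 - 1, by omega⟩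
  have hkJ : k + 1 < J := hk ▸ b.2
  obtain ⟨t, ht0, ht⟩ := hne (k + 1) hkJ
  have hbelow := softLT_snd_lt_of_unique hg0 h0 (hsel k (by omega)).2 (hsel (k + 1) hkJ).2
    (finite_softLTSublevel z v hg0 hkJ hfin (by linarith [softLT_fst_nonneg g z v (k + 2)]))
    ⟨t, ht0, ht.trans (Set.encard_le_encard (setOf_le_mul_subset_softLTSublevel z v hg0 _ t))⟩
  rw [← hk, ← hab, ← (hsel a.1 (by omega)).1] at hbelow
  exact hbelow.not_ge (softLT_snd_mono z v hg0 _ (by omega))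

theorem card_selected_le_encard {ζ : ℝ} (hζ : ∀ i, v i ≠ ζ)
    (hG : ∀ x, (softLT g z v J).2 x ≤ ζ) (y : E) :
    (Nat.card {a : Fin J // z (iSel (a.1 + 1)) = y} : ℕ∞) ≤ {i | v i < ζ ∧ z i = y}.encard := by
  rw [← Set.coe_ofPred, Nat.card_coe_set_eq, Set.toFinite _ |>.cast_ncard_eq]
  refine Set.encard_le_encard_of_injOn (fun a (ha : z _ = y) => ⟨?_, ha⟩)
    (softLT_selected_injective hg0 h0 hfin hne hsel).injOn
  have hon := (hsel a.1 a.2).1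
  refine lt_of_le_of_ne ?_ (hζ _)
  rw [← hon]
  exact (softLT_snd_mono z v hg0 _ a.2).trans (hG _)

end Nonneg

end SoftLocalTime

section PoissonPointProcess

theorem tsum_poissonMeasure_singleton (r : NNReal) : ∑' n, poissonMeasure r {n} = 1 := by
  rw [← measure_univ (μ := poissonMeasure r), ← Set.iUnion_of_singleton, measure_iUnion]
  · exact pairwise_disjoint_fiber id
  · exact fun _ => measurableSet_singleton _

theorem tendsto_sum_range_poissonMeasure_singleton (j : ℕ) :
    Tendsto (fun T : ℕ => ∑ n ∈ range j, poissonMeasure T {n}) atTop (𝓝 0) := by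
  rw [← sum_const_zero (s := range j)]
  refine tendsto_finsetSum _ fun n _ => ?_
  simp_rw [poissonMeasure_singleton, NNReal.coe_natCast]
  rw [← ENNReal.ofReal_zero]
  refine ENNReal.tendsto_ofReal ?_
  simpa [mul_comm] using ((Real.tendsto_pow_mul_exp_neg_atTop_nhds_zero n).comp
    tendsto_natCast_atTop_atTop).div_const (n.factorial : ℝ)

theorem measurableSet_setOf_nonneg_le {E : Type*} [MeasurableSpace E] {c : E → ℝ}
    (hc : Measurable c) : MeasurableSet {p : E × ℝ | 0 ≤ p.2 ∧ p.2 ≤ c p.1} :=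
  (measurableSet_le measurable_const measurable_snd).inter
    (measurableSet_le measurable_snd (hc.comp measurable_fst))

theorem measure_prod_restrict_Ici_setOf_le {E : Type*} [MeasurableSpace E] (μ : Measure E)
    {c : E → ℝ} (hc : Measurable c) :
    (μ.prod (volume.restrict (Set.Ici 0))) {p | 0 ≤ p.2 ∧ p.2 ≤ c p.1}
      = ∫⁻ x, ENNReal.ofReal (c x) ∂μ := by
  rw [Measure.prod_apply (measurableSet_setOf_nonneg_le hc)]
  refine lintegral_congr fun x => ?_
  rw [show Prod.mk x ⁻¹' {p : E × ℝ | 0 ≤ p.2 ∧ p.2 ≤ c p.1} = Set.Icc 0 (c x) from rfl,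
    Measure.restrict_apply measurableSet_Icc, Set.inter_eq_left.2 fun _ hs => hs.1,
    Real.volume_Icc, sub_zero]

theorem measure_prod_restrict_Ici_setOf_le_mul {E : Type*} [MeasurableSpace E] (μ : Measure E)
    {f : E → ℝ} (hf : Measurable f) {c : ℝ} (hc : 0 ≤ c) :
    (μ.prod (volume.restrict (Set.Ici 0))) {p | 0 ≤ p.2 ∧ p.2 ≤ c * f p.1}
      = ENNReal.ofReal c * ∫⁻ x, ENNReal.ofReal (f x) ∂μ := by
  rw [measure_prod_restrict_Ici_setOf_le μ (hf.const_mul c)]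
  simp_rw [ENNReal.ofReal_mul hc]
  exact lintegral_const_mul _ hf.ennreal_ofReal

variable {Ω : Type*} [MeasurableSpace Ω]

theorem measurableSet_natCast_le_encard {B : ℕ → Set Ω} (hB : ∀ i, MeasurableSet (B i))
    (n : ℕ) : MeasurableSet {ω | (n : ℕ∞) ≤ {i | ω ∈ B i}.encard} := by
  have : {ω | (n : ℕ∞) ≤ {i | ω ∈ B i}.encard} = ⋃ (F : Finset ℕ) (_ : #F = n), ⋂ i ∈ F, B i := by
    ext ω
    simp only [Set.mem_ofPred_eq, Set.mem_iUnion, Set.mem_iInter, exists_prop]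
    constructor
    · intro h
      obtain ⟨F, hFsub, hFcard⟩ := Set.exists_subset_encard_eq h
      have hF : F.Finite := Set.finite_of_encard_eq_coe hFcard
      refine ⟨hF.toFinset, ?_, fun i hi => hFsub (hF.mem_toFinset.1 hi)⟩
      rwa [← Nat.cast_inj (R := ℕ∞), ← hF.encard_eq_coe_toFinset_card]
    · rintro ⟨F, rfl, hF⟩
      rw [← Set.encard_coe_eq_coe_finsetCard]
      exact Set.encard_le_encard hF
  rw [this]
  exact .iUnion fun F => .iUnion fun _ => .biInter F.countable_toSet fun i _ => hB i

theorem measurableSet_encard_eq_natCast {B : ℕ → Set Ω} (hB : ∀ i, MeasurableSet (B i))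
    (n : ℕ) : MeasurableSet {ω | {i | ω ∈ B i}.encard = n} := by
  have : {ω | {i | ω ∈ B i}.encard = n} =
      {ω | (n : ℕ∞) ≤ {i | ω ∈ B i}.encard} \ {ω | ((n + 1 : ℕ) : ℕ∞) ≤ {i | ω ∈ B i}.encard} := by
    ext ω
    simp only [Set.mem_ofPred_eq, Set.mem_sdiff, not_le, Nat.cast_succ,
      ENat.lt_add_one_iff (ENat.natCast_ne_top n), ← le_antisymm_iff, eq_comm]
  rw [this]
  exact (measurableSet_natCast_le_encard hB n).diff (measurableSet_natCast_le_encard hB (n + 1))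

variable {E : Type*} [MeasurableSpace E] {Q : Measure Ω} {z : ℕ → Ω → E} {v : ℕ → Ω → ℝ}
  {μ : Measure E}

namespace IsPPP

variable (hppp : IsPPP Q z v μ)
include hppp

theorem measurableSet_encard_eq {A : Set (E × ℝ)} (hA : MeasurableSet A) (n : ℕ) :
    MeasurableSet {ω | {i | (z i ω, v i ω) ∈ A}.encard = n} :=
  measurableSet_encard_eq_natCast (B := fun i => {ω | (z i ω, v i ω) ∈ A})
    (fun i => (hppp.meas_z i).prodMk (hppp.meas_v i) hA) n

theorem measure_encard_eq {A : Set (E × ℝ)} (hA : MeasurableSet A)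
    (hAfin : μ.prod (volume.restrict (Set.Ici 0)) A < ⊤) (n : ℕ) :
    Q {ω | {i | (z i ω, v i ω) ∈ A}.encard = n} =
      poissonMeasure (μ.prod (volume.restrict (Set.Ici 0)) A).toNNReal {n} := by
  rw [hppp.count A hA hAfin n, poissonMeasure_singleton]
  rfl

theorem measure_encard_lt {A : Set (E × ℝ)} (hA : MeasurableSet A)
    (hAfin : μ.prod (volume.restrict (Set.Ici 0)) A < ⊤) (j : ℕ) :
    Q {ω | {i | (z i ω, v i ω) ∈ A}.encard < j} =
      ∑ n ∈ range j, poissonMeasure (μ.prod (volume.restrict (Set.Ici 0)) A).toNNReal {n} := by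
  have : {ω | {i | (z i ω, v i ω) ∈ A}.encard < j} =
      ⋃ n ∈ range j, {ω | {i | (z i ω, v i ω) ∈ A}.encard = n} := by
    ext ω
    simp only [Set.mem_ofPred_eq, Set.mem_iUnion, mem_range, exists_prop]
    constructor
    · intro h
      lift {i | (z i ω, v i ω) ∈ A}.encard to ℕ using (h.trans (ENat.natCast_lt_top j)).ne with m hm
      exact ⟨m, by exact_mod_cast h, rfl⟩
    · rintro ⟨n, hn, h⟩
      rw [h]
      exact_mod_cast hn
  rw [this, measure_biUnion_finset (fun m _ n _ hmn => Set.disjoint_left.2 fun ω h₁ h₂ =>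
    hmn (by exact_mod_cast h₁.symm.trans h₂)) fun n _ => hppp.measurableSet_encard_eq hA n]
  exact sum_congr rfl fun n _ => hppp.measure_encard_eq hA hAfin n

theorem ae_exists_le_encard {A : ℕ → Set (E × ℝ)} (hA : ∀ T, MeasurableSet (A T))
    (hAT : ∀ T : ℕ, μ.prod (volume.restrict (Set.Ici 0)) (A T) = T) (j : ℕ) :
    ∀ᵐ ω ∂Q, ∃ T, (j : ℕ∞) ≤ {i | (z i ω, v i ω) ∈ A T}.encard := by
  refine ae_iff.2 (le_antisymm (ge_of_tendsto' (tendsto_sum_range_poissonMeasure_singleton j)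
    fun T => ?_) zero_le)
  rw [← ENNReal.toNNReal_natCast T, ← hAT T, ← hppp.measure_encard_lt (hA T) (by simp [hAT]) j]
  exact measure_mono fun ω hω => not_le.1 fun h => hω ⟨T, h⟩

theorem ae_exists_le_encard_setOf_le_mul {f : E → ℝ} (hf : Measurable f)
    (hf1 : ∫⁻ x, ENNReal.ofReal (f x) ∂μ = 1) (j : ℕ) :
    ∀ᵐ ω ∂Q, ∃ t, 0 ≤ t ∧ (j : ℕ∞) ≤ {i | v i ω ≤ t * f (z i ω)}.encard := by
  have hAT (T : ℕ) :
      μ.prod (volume.restrict (Set.Ici 0)) {p : E × ℝ | 0 ≤ p.2 ∧ p.2 ≤ T * f p.1} = T := by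
    rw [measure_prod_restrict_Ici_setOf_le_mul μ hf T.cast_nonneg, hf1, mul_one,
      ENNReal.ofReal_natCast]
  filter_upwards [hppp.ae_exists_le_encard (fun T => measurableSet_setOf_nonneg_le
    (hf.const_mul _)) hAT j] with ω ⟨T, hT⟩
  exact ⟨T, T.cast_nonneg, hT.trans (Set.encard_le_encard fun i hi => hi.2)⟩

variable [IsProbabilityMeasure Q]

theorem ae_finite {A : Set (E × ℝ)} (hA : MeasurableSet A)
    (hAfin : μ.prod (volume.restrict (Set.Ici 0)) A < ⊤) :
    ∀ᵐ ω ∂Q, {i | (z i ω, v i ω) ∈ A}.Finite := by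
  set U := ⋃ n : ℕ, {ω | {i | (z i ω, v i ω) ∈ A}.encard = n}
  have hU : MeasurableSet U := .iUnion fun n => hppp.measurableSet_encard_eq hA n
  have hQU : Q U = 1 := by
    rw [measure_iUnion (fun m n hmn => Set.disjoint_left.2 fun ω h₁ h₂ =>
      hmn (by exact_mod_cast h₁.symm.trans h₂)) fun n => hppp.measurableSet_encard_eq hA n]
    simp_rw [hppp.measure_encard_eq hA hAfin]
    exact tsum_poissonMeasure_singleton _
  filter_upwards [ae_iff.2 ((prob_compl_eq_zero_iff hU).2 hQU)] with ω hω
  obtain ⟨n, hn⟩ := Set.mem_iUnion.1 hω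
  exact Set.finite_of_encard_eq_coe hn

theorem ae_forall_ne (ζ : ℝ) : ∀ᵐ ω ∂Q, ∀ i, v i ω ≠ ζ := by
  have hA : MeasurableSet {p : E × ℝ | p.2 = ζ} :=
    measurableSet_eq_fun measurable_snd measurable_const
  have hA0 : μ.prod (volume.restrict (Set.Ici 0)) {p : E × ℝ | p.2 = ζ} = 0 := by
    rw [Measure.prod_apply hA]
    simp
  have h := hppp.measure_encard_eq hA (by simp [hA0]) 0
  rw [hA0, ENNReal.toNNReal_zero, poissonMeasure_singleton] at h
  simp only [NNReal.coe_zero, neg_zero, Real.exp_zero, pow_zero, Nat.factorial_zero,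
    Nat.cast_one, div_one, mul_one, ENNReal.ofReal_one] at h
  filter_upwards [ae_iff.2 ((prob_compl_eq_zero_iff (hppp.measurableSet_encard_eq hA 0)).2 h)]
    with ω hω i hi
  exact Set.encard_ne_zero.2 ⟨i, hi⟩ (by exact_mod_cast hω)

theorem ae_forall_finite_setOf_le_mul {f : E → ℝ} (hf : Measurable f) (hf0 : ∀ x, 0 ≤ f x)
    (hfI : ∫⁻ x, ENNReal.ofReal (f x) ∂μ ≠ ⊤) :
    ∀ᵐ ω ∂Q, ∀ c : ℝ, {i | v i ω ≤ c * f (z i ω)}.Finite := by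
  have hM : ∀ M : ℕ,
      ∀ᵐ ω ∂Q, {i | (z i ω, v i ω) ∈ {p : E × ℝ | 0 ≤ p.2 ∧ p.2 ≤ M * f p.1}}.Finite :=
    fun M => hppp.ae_finite (measurableSet_setOf_nonneg_le (hf.const_mul _)) (by
      rw [measure_prod_restrict_Ici_setOf_le_mul μ hf M.cast_nonneg]
      exact ENNReal.mul_lt_top ENNReal.ofReal_lt_top hfI.lt_top)
  filter_upwards [hppp.nonneg, ae_all_iff.2 hM] with ω h0 hfin c
  obtain ⟨M, hM⟩ := exists_nat_ge c
  exact (hfin M).subset fun i (hi : v i ω ≤ _) =>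
    ⟨h0 i, hi.trans (mul_le_mul_of_nonneg_right hM (hf0 _))⟩

end IsPPP

end PoissonPointProcess

theorem soft_local_time_domination_general
    {E : Type*} [MeasurableSpace E]
    (μ : Measure E)
    {Ω : Type*} [MeasurableSpace Ω] (Q : Measure Ω) [IsProbabilityMeasure Q]
    (z : ℕ → Ω → E) (v : ℕ → Ω → ℝ) (hppp : IsPPP Q z v μ)
    (g : ℕ → E → ℝ) (hg : ∀ j, Measurable (g j)) (hg0 : ∀ j x, 0 ≤ g j x)
    (hg1 : ∀ j, 1 ≤ j → ∫⁻ x, ENNReal.ofReal (g j x) ∂μ = 1)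
    (J : ℕ)
    (iSel : ℕ → Ω → ℕ)
    (hSel : ∀ j : ℕ, 1 ≤ j → j ≤ J → ∀ᵐ ω ∂Q,
      (softLT g (fun i => z i ω) (fun i => v i ω) j).2 (z (iSel j ω) ω)
          = v (iSel j ω) ω ∧
        ∀ i : ℕ, (softLT g (fun i' => z i' ω) (fun i' => v i' ω) j).2 (z i ω) = v i ω →
          i = iSel j ω)
    (ζ : ℝ) :
    Q {ω | ∀ x : E, (softLT g (fun i => z i ω) (fun i => v i ω) J).2 x ≤ ζ}
      ≤ Q {ω | ∀ y : E,
          (Nat.card {a : Fin J // z (iSel (a.1 + 1) ω) ω = y} : ℕ∞)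
            ≤ {i : ℕ | v i ω < ζ ∧ z i ω = y}.encard} := by
  have hsum : ∫⁻ x, ENNReal.ofReal (∑ j ∈ range J, g (j + 1) x) ∂μ = J := by
    simp_rw [ENNReal.ofReal_sum_of_nonneg fun j _ => hg0 _ _]
    rw [lintegral_finsetSum _ fun j _ => (hg _).ennreal_ofReal]
    simp [hg1 _ (Nat.succ_pos _)]
  have hfin := hppp.ae_forall_finite_setOf_le_mul (Finset.measurable_sum _ fun j _ => hg (j + 1))
    (fun x => sum_nonneg fun j _ => hg0 _ x) (hsum ▸ ENNReal.natCast_ne_top J)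
  have hne : ∀ᵐ ω ∂Q, ∀ k < J, ∃ t, 0 ≤ t ∧
      ((k + 1 : ℕ) : ℕ∞) ≤ {i | v i ω ≤ t * g (k + 1) (z i ω)}.encard :=
    ae_all_iff.2 fun k => (hppp.ae_exists_le_encard_setOf_le_mul (hg (k + 1))
      (hg1 (k + 1) k.succ_pos) (k + 1)).mono fun _ h _ => h
  have hsel := (ae_ball_iff (Set.to_countable (Set.Iio J))).2 fun k hk =>
    hSel (k + 1) k.succ_pos hk
  refine measure_mono_ae ?_
  filter_upwards [hppp.nonneg, hfin, hne, hsel, hppp.ae_forall_ne ζ] with ω h0 hfin hne hsel hζ hG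
  exact card_selected_le_encard (iSel := (iSel · ω)) hg0 h0 hfin hne hsel hζ hG

/-- **Domination via soft local times** (Corollary `c:couplesystem`): in the soft local time
construction with probability densities `g_1, …, g_J` and selected indices `i_1, …, i_J`
(the a.s. unique indices with `G_j(z_{i_j}) = v_{i_j}`), for every `ζ > 0` the probability
that the point measure `∑_{j ≤ J} δ_{z_{i_j}}` is dominated by `∑_{i : v_i < ζ} δ_{z_i}`
is at least the probability that the soft local time `G_J` stays below `ζ` everywhere. -/
theorem soft_local_time_domination
    {E : Type*} [MetricSpace E] [CompleteSpace E] [TopologicalSpace.SeparableSpace E]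
    [LocallyCompactSpace E] [MeasurableSpace E] [BorelSpace E]
    (μ : Measure E) [IsFiniteMeasureOnCompacts μ]
    {Ω : Type*} [MeasurableSpace Ω] (Q : Measure Ω) [IsProbabilityMeasure Q]
    (z : ℕ → Ω → E) (v : ℕ → Ω → ℝ) (hppp : IsPPP Q z v μ)
    (g : ℕ → E → ℝ) (hg : ∀ j, Measurable (g j)) (hg0 : ∀ j x, 0 ≤ g j x)
    (hg1 : ∀ j, 1 ≤ j → ∫⁻ x, ENNReal.ofReal (g j x) ∂μ = 1)
    (J : ℕ) (hJ : 1 ≤ J)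
    (iSel : ℕ → Ω → ℕ)
    (hSel : ∀ j : ℕ, 1 ≤ j → j ≤ J → ∀ᵐ ω ∂Q,
      (softLT g (fun i => z i ω) (fun i => v i ω) j).2 (z (iSel j ω) ω)
          = v (iSel j ω) ω ∧
        ∀ i : ℕ, (softLT g (fun i' => z i' ω) (fun i' => v i' ω) j).2 (z i ω) = v i ω →
          i = iSel j ω)
    (ζ : ℝ) (hζ : 0 < ζ) :
    Q {ω | ∀ x : E, (softLT g (fun i => z i ω) (fun i => v i ω) J).2 x ≤ ζ}
      ≤ Q {ω | ∀ y : E,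
          (Nat.card {a : Fin J // z (iSel (a.1 + 1) ω) ω = y} : ℕ∞)
            ≤ {i : ℕ | v i ω < ζ ∧ z i ω = y}.encard} :=
  soft_local_time_domination_general μ Q z v hppp g hg hg0 hg1 J iSel hSel ζ
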